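/- Let Φ : ℝ^W → ℝ^d be differentiable with Lipschitz-continuous differential, and for a target f ∈ ℝ^d define the loss L_f(w) = (1/2)‖f − Φ(w)‖². Then the gradient flow w'(t) = −∇L_f(w(t)), w(0) = 0, has a solution defined for all t ≥ 0; in particular, any solution satisfies ‖w(t)‖² ≤ L_f(0)·t for all t ≥ 0, so it cannot blow up in finite time. -/

import Mathlib

open MeasureTheory Filter Topology Set

/-- The square loss `L_f(w) = (1/2)‖f - Φ(w)‖²`. -/
noncomputable def loss {W d : ℕ} (Φ : EuclideanSpace ℝ (Fin W) → EuclideanSpace ℝ (Fin d))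
    (f : EuclideanSpace ℝ (Fin d)) (w : EuclideanSpace ℝ (Fin W)) : ℝ :=
  (1 / 2) * ‖f - Φ w‖ ^ 2

/-!
Along a gradient flow the loss decreases at rate `‖∇L‖²`, so `∫₀ᵗ ‖∇L(w)‖² ≤ L_f(0)`, and
Cauchy–Schwarz turns `‖w(t)‖ ≤ ∫₀ᵗ ‖∇L(w)‖` into `‖w(t)‖² ≤ L_f(0)·t`.
The gradient `∇L(w) = DΦ(w)*(Φ(w) - f)` is locally Lipschitz, so solutions are unique. Replacing
the field outside a large ball by its value at the radial projection gives a globally Lipschitz,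
bounded field, whose solution exists on every `[0, T]`; the a priori bound keeps it inside the
ball, where it solves the gradient flow itself. Gluing these solutions gives the global one.
-/

open Metric
open scoped NNReal

section RadialRetraction

variable {E : Type*} [NormedAddCommGroup E] [NormedSpace ℝ E] {R : ℝ}

noncomputable def radialRetraction (R : ℝ) (x : E) : E :=
  (R / max R ‖x‖) • x

lemma radialRetraction_of_norm_le (hR : 0 < R) {x : E} (hx : ‖x‖ ≤ R) :
    radialRetraction R x = x := by
  rw [radialRetraction, max_eq_left hx, div_self hR.ne', one_smul]

lemma norm_radialRetraction_le (hR : 0 < R) (x : E) : ‖radialRetraction R x‖ ≤ R := by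
  have hm : 0 < max R ‖x‖ := lt_max_of_lt_left hR
  rw [radialRetraction, norm_smul, Real.norm_of_nonneg (by positivity), div_mul_eq_mul_div,
    div_le_iff₀ hm]
  exact mul_le_mul_of_nonneg_left (le_max_right _ _) hR.le

lemma lipschitzWith_radialRetraction (hR : 0 < R) :
    LipschitzWith 2 (radialRetraction (E := E) R) := by
  refine LipschitzWith.of_dist_le_mul fun x y => ?_
  set mx := max R ‖x‖
  set my := max R ‖y‖
  have hmx : 0 < mx := lt_max_of_lt_left hR
  have hmy : 0 < my := lt_max_of_lt_left hR
  have hRx : R / mx ≤ 1 := (div_le_one hmx).2 (le_max_left _ _)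
  have hyy : ‖y‖ / my ≤ 1 := (div_le_one hmy).2 (le_max_right _ _)
  have hsplit : radialRetraction R x - radialRetraction R y
      = (R / mx) • (x - y) + (R / mx - R / my) • y := by
    simp only [radialRetraction, smul_sub, sub_smul]
    abel
  have h₁ : ‖(R / mx) • (x - y)‖ ≤ ‖x - y‖ := by
    rw [norm_smul, Real.norm_of_nonneg (by positivity)]
    exact mul_le_of_le_one_left (norm_nonneg _) hRx
  have h₂ : ‖(R / mx - R / my) • y‖ ≤ ‖x - y‖ := calc
    ‖(R / mx - R / my) • y‖ = R / mx * (|my - mx| * (‖y‖ / my)) := by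
      rw [show R / mx - R / my = R / mx * ((my - mx) / my) by field_simp, norm_smul,
        Real.norm_eq_abs, abs_mul, abs_div, abs_div, abs_of_pos hR, abs_of_pos hmx, abs_of_pos hmy]
      ring
    _ ≤ 1 * (|‖y‖ - ‖x‖| * 1) := by
      gcongr ?_ * (?_ * ?_)
      have := abs_max_sub_max_le_abs ‖y‖ ‖x‖ R
      rwa [max_comm ‖y‖, max_comm ‖x‖] at this
    _ ≤ ‖x - y‖ := by
      rw [one_mul, mul_one, norm_sub_rev]
      exact abs_norm_sub_norm_le y x
  rw [dist_eq_norm, dist_eq_norm, hsplit, NNReal.coe_ofNat]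
  linarith [norm_add_le ((R / mx) • (x - y)) ((R / mx - R / my) • y)]

end RadialRetraction

theorem LocallyLipschitz.clm_apply {α E F : Type*} [PseudoMetricSpace α] [NormedAddCommGroup E]
    [NormedSpace ℝ E] [NormedAddCommGroup F] [NormedSpace ℝ F] {T : α → E →L[ℝ] F} {u : α → E}
    (hT : LocallyLipschitz T) (hu : LocallyLipschitz u) : LocallyLipschitz fun x => T x (u x) :=
  have happly : LocallyLipschitz fun p : (E →L[ℝ] F) × E => p.1 p.2 :=
    (isBoundedBilinearMap_apply.contDiff (n := 1)).locallyLipschitz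
  happly.comp (hT.prodMk hu)

theorem sq_intervalIntegral_le_mul_intervalIntegral_sq {φ : ℝ → ℝ} {a b : ℝ} (hab : a ≤ b)
    (hφ : IntervalIntegrable φ volume a b)
    (hφ2 : IntervalIntegrable (fun s => φ s ^ 2) volume a b) :
    (∫ s in a..b, φ s) ^ 2 ≤ (b - a) * ∫ s in a..b, φ s ^ 2 := by
  set I := ∫ s in a..b, φ s
  set J := ∫ s in a..b, φ s ^ 2
  have hexpand : ∫ s in a..b, ((b - a) * φ s - I) ^ 2 = (b - a) * ((b - a) * J - I ^ 2) := by
    have h : (fun s => ((b - a) * φ s - I) ^ 2)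
        = fun s => ((b - a) ^ 2 * φ s ^ 2 - 2 * (b - a) * I * φ s) + I ^ 2 := by
      ext s; ring
    rw [h, intervalIntegral.integral_add ((hφ2.const_mul _).sub (hφ.const_mul _))
        intervalIntegrable_const, intervalIntegral.integral_sub (hφ2.const_mul _) (hφ.const_mul _),
      intervalIntegral.integral_const_mul, intervalIntegral.integral_const_mul,
      intervalIntegral.integral_const, smul_eq_mul]
    ring
  have hnonneg := intervalIntegral.integral_nonneg (μ := volume) hab
    fun s _ => sq_nonneg ((b - a) * φ s - I)
  rw [hexpand] at hnonneg
  rcases hab.eq_or_lt with rfl | hlt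
  · simp [I]
  · nlinarith [(mul_nonneg_iff_of_pos_left (sub_pos.2 hlt)).1 hnonneg]

section AutonomousODE

variable {E : Type*} [NormedAddCommGroup E] [NormedSpace ℝ E] {v : E → E}

theorem exists_hasDerivAt_Icc_of_lipschitzWith [CompleteSpace E] {K : ℝ≥0}
    (hv : LipschitzWith K v) (hb : Bornology.IsBounded (range v)) (x₀ : E) (T : ℝ) :
    ∃ w : ℝ → E, w 0 = x₀ ∧ ∀ t ∈ Icc 0 T, HasDerivAt w (v (w t)) t := by
  obtain ⟨C, hC, hCv⟩ := hb.exists_pos_norm_le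
  set S : ℝ := |T| + 1
  have hS : 0 < S := by positivity
  have hTS : T < S := (le_abs_self T).trans_lt (lt_add_one _)
  have hPL : IsPicardLindelof (fun _ => v) (tmin := -S) (tmax := S) ⟨0, by simp [hS.le]⟩ x₀
      ⟨C * S, by positivity⟩ 0 ⟨C, hC.le⟩ K :=
    .of_time_independent (fun x _ => hCv _ (mem_range_self x)) hv.lipschitzOnWith
      (by simp only [sub_zero, sub_neg_eq_add, zero_add, max_self, NNReal.coe_zero]; exact le_rfl)
  obtain ⟨w, hw₀, hw⟩ := hPL.exists_eq_forall_mem_Icc_hasDerivWithinAt₀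
  exact ⟨w, hw₀, fun t ht => (hw t ⟨by linarith [ht.1], by linarith [ht.2]⟩).hasDerivAt
    (Icc_mem_nhds (by linarith [ht.1]) (by linarith [ht.2]))⟩

theorem ODE_solution_unique_of_locallyLipschitz (hv : LocallyLipschitz v) {w₁ w₂ : ℝ → E}
    {T : ℝ} (hw₁ : ∀ t ∈ Icc 0 T, HasDerivAt w₁ (v (w₁ t)) t)
    (hw₂ : ∀ t ∈ Icc 0 T, HasDerivAt w₂ (v (w₂ t)) t) (h₀ : w₁ 0 = w₂ 0) :
    EqOn w₁ w₂ (Icc 0 T) := by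
  have hc₁ : ContinuousOn w₁ (Icc 0 T) := fun t ht => (hw₁ t ht).continuousAt.continuousWithinAt
  have hc₂ : ContinuousOn w₂ (Icc 0 T) := fun t ht => (hw₂ t ht).continuousAt.continuousWithinAt
  obtain ⟨K, hK⟩ := hv.locallyLipschitzOn.exists_lipschitzOnWith_of_compact
    ((isCompact_Icc.image_of_continuousOn hc₁).union (isCompact_Icc.image_of_continuousOn hc₂))
  exact ODE_solution_unique_of_mem_Icc_right (v := fun _ => v) (fun _ _ => hK)
    hc₁ (fun t ht => (hw₁ t (Ico_subset_Icc_self ht)).hasDerivWithinAt)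
    (fun t ht => .inl (mem_image_of_mem _ (Ico_subset_Icc_self ht)))
    hc₂ (fun t ht => (hw₂ t (Ico_subset_Icc_self ht)).hasDerivWithinAt)
    (fun t ht => .inr (mem_image_of_mem _ (Ico_subset_Icc_self ht))) h₀

theorem exists_forall_hasDerivAt_of_forall_exists_Icc (hv : LocallyLipschitz v) {x₀ : E}
    (hT : ∀ T : ℝ, ∃ w : ℝ → E, w 0 = x₀ ∧ ∀ t ∈ Icc 0 T, HasDerivAt w (v (w t)) t) :
    ∃ w : ℝ → E, w 0 = x₀ ∧ ∀ t ≥ 0, HasDerivAt w (v (w t)) t := by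
  choose w hw₀ hw using fun n : ℕ => hT n
  have hagree : ∀ m n : ℕ, ∀ s : ℝ, 0 ≤ s → s ≤ m → s ≤ n → w m s = w n s :=
    fun m n s hs hm hn => ODE_solution_unique_of_locallyLipschitz hv (T := min m n)
      (fun t ht => hw m t ⟨ht.1, ht.2.trans (min_le_left _ _)⟩)
      (fun t ht => hw n t ⟨ht.1, ht.2.trans (min_le_right _ _)⟩) ((hw₀ m).trans (hw₀ n).symm)
      ⟨hs, le_min hm hn⟩
  -- With `+ 2`, near each `t ≥ 0` (also to the left of `0`) the glued curve is a single `w n`.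
  refine ⟨fun t => w (⌊t⌋₊ + 2) t, hw₀ _, fun t ht => ?_⟩
  have hglue : (fun s => w (⌊s⌋₊ + 2) s) =ᶠ[𝓝 t] w (⌊t⌋₊ + 2) := by
    filter_upwards [Ioo_mem_nhds (sub_one_lt t) (lt_add_one t)] with s hs
    rcases lt_or_ge s 0 with hs₀ | hs₀
    · rw [Nat.floor_of_nonpos hs₀.le, Nat.floor_eq_zero.2 (by linarith [hs.1])]
    · apply hagree _ _ s hs₀ <;> push_cast <;>
        linarith [Nat.lt_floor_add_one s, Nat.lt_floor_add_one t, hs.2]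
  exact (hw _ t ⟨ht, by push_cast; linarith [Nat.lt_floor_add_one t]⟩).congr_of_eventuallyEq hglue

variable [ProperSpace E]

theorem exists_hasDerivAt_Icc_comp_radialRetraction (hv : LocallyLipschitz v) {R : ℝ}
    (hR : 0 < R) (x₀ : E) (T : ℝ) :
    ∃ w : ℝ → E, w 0 = x₀ ∧ ∀ t ∈ Icc 0 T, HasDerivAt w (v (radialRetraction R (w t))) t := by
  obtain ⟨K, hK⟩ := hv.locallyLipschitzOn.exists_lipschitzOnWith_of_compact
    (isCompact_closedBall (0 : E) R)
  have hmaps : ∀ x, radialRetraction R x ∈ closedBall (0 : E) R := fun x =>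
    mem_closedBall_zero_iff.2 (norm_radialRetraction_le hR x)
  have hlip : LipschitzWith (K * 2) (v ∘ radialRetraction R) := lipschitzOnWith_univ.1 <|
    hK.comp (lipschitzWith_radialRetraction hR).lipschitzOnWith fun x _ => hmaps x
  have hbdd : Bornology.IsBounded (range (v ∘ radialRetraction R)) :=
    ((isCompact_closedBall 0 R).image_of_continuousOn hv.continuous.continuousOn).isBounded.subset
      (by rw [range_comp]; exact image_mono (range_subset_iff.2 hmaps))
  exact exists_hasDerivAt_Icc_of_lipschitzWith hlip hbdd x₀ T

theorem exists_hasDerivAt_Icc_of_locallyLipschitz_of_norm_le (hv : LocallyLipschitz v) {x₀ : E}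
    {T ρ : ℝ} (hρ : ∀ w : ℝ → E, w 0 = x₀ → ∀ b ∈ Icc 0 T,
      (∀ s ∈ Icc 0 b, HasDerivAt w (v (w s)) s) → ‖w b‖ ≤ ρ) :
    ∃ w : ℝ → E, w 0 = x₀ ∧ ∀ t ∈ Icc 0 T, HasDerivAt w (v (w t)) t := by
  set ρ' := max ρ ‖x₀‖
  have hR : 0 < ρ' + 1 := by positivity
  obtain ⟨g, hg₀, hg⟩ := exists_hasDerivAt_Icc_comp_radialRetraction hv hR x₀ T
  have hsolves : ∀ b ≤ T, (∀ s ∈ Icc 0 b, ‖g s‖ ≤ ρ' + 1) →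
      ∀ s ∈ Icc 0 b, HasDerivAt g (v (g s)) s := fun b hb hgR s hs => by
    simpa only [radialRetraction_of_norm_le hR (hgR s hs)] using hg s ⟨hs.1, hs.2.trans hb⟩
  have hgc : ContinuousOn g (Icc 0 T) := fun t ht => (hg t ht).continuousAt.continuousWithinAt
  -- While `g` stays in the ball of radius `ρ' + 1` it solves `w' = v w`, so the a priori
  -- bound keeps it in the ball of radius `ρ'`.
  have hinv : Icc 0 T ⊆ {t | ‖g t‖ ≤ ρ'} := by
    refine IsClosed.Icc_subset_of_forall_mem_nhdsGT_of_Icc_subset ?_ ?_ fun t ht hgt => ?_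
    · rw [inter_comm]
      exact hgc.norm.preimage_isClosed_of_isClosed isClosed_Icc isClosed_Iic
    · simp [hg₀, ρ']
    · have hgtR : ‖g t‖ < ρ' + 1 := (hgt ⟨ht.1, le_rfl⟩).trans_lt (lt_add_one _)
      obtain ⟨ε, hε, hnear⟩ := Metric.eventually_nhds_iff.1
        ((hg t (Ico_subset_Icc_self ht)).continuousAt.norm.eventually (gt_mem_nhds hgtR))
      filter_upwards [Ioo_mem_nhdsGT (lt_min (lt_add_of_pos_right t hε) ht.2)] with u hu
      have huT : u ≤ T := hu.2.le.trans (min_le_right _ _)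
      refine (hρ g hg₀ u ⟨ht.1.trans hu.1.le, huT⟩ (hsolves u huT fun s hs => ?_)).trans
        (le_max_left _ _)
      rcases le_or_gt s t with hst | hst
      · exact (hgt ⟨hs.1, hst⟩).trans (le_add_of_nonneg_right zero_le_one)
      · refine (hnear ?_).le
        rw [Real.dist_eq, abs_of_pos (sub_pos.2 hst)]
        linarith [hs.2, hu.2.trans_le (min_le_left _ _)]
  refine ⟨g, hg₀, fun t ht => hsolves t ht.2 (fun s hs => ?_) t ⟨ht.1, le_rfl⟩⟩
  exact (hinv ⟨hs.1, hs.2.trans ht.2⟩).trans (le_add_of_nonneg_right zero_le_one)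

end AutonomousODE

section GradientFlow

variable {F : Type*} [NormedAddCommGroup F] [InnerProductSpace ℝ F] [CompleteSpace F] {ℒ : F → ℝ}

theorem norm_sub_sq_le_mul_of_hasDerivAt_neg_gradient (hℒ : Differentiable ℝ ℒ)
    (hgrad : Continuous (gradient ℒ)) {w : ℝ → F} {t : ℝ} (ht : 0 ≤ t)
    (hw : ∀ s ∈ Icc 0 t, HasDerivAt w (-gradient ℒ (w s)) s) :
    ‖w t - w 0‖ ^ 2 ≤ t * (ℒ (w 0) - ℒ (w t)) := by
  rw [← uIcc_of_le ht] at hw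
  have hg : ContinuousOn (fun s => gradient ℒ (w s)) (uIcc 0 t) :=
    hgrad.comp_continuousOn fun s hs => (hw s hs).continuousAt.continuousWithinAt
  have hdescent : ∀ s ∈ uIcc 0 t, HasDerivAt (fun s => ℒ (w s)) (-‖gradient ℒ (w s)‖ ^ 2) s := by
    intro s hs
    refine ((hℒ (w s)).hasGradientAt.hasFDerivAt.comp_hasDerivAt s (hw s hs)).congr_deriv ?_
    rw [InnerProductSpace.toDual_apply_apply, inner_neg_right, real_inner_self_eq_norm_sq]
  have hdissipation : ∫ s in (0)..t, ‖gradient ℒ (w s)‖ ^ 2 = ℒ (w 0) - ℒ (w t) := by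
    have := intervalIntegral.integral_eq_sub_of_hasDerivAt hdescent
      ((hg.norm.pow 2).neg.intervalIntegrable)
    rw [intervalIntegral.integral_neg] at this
    linarith
  have hlength : ‖w t - w 0‖ ≤ ∫ s in (0)..t, ‖gradient ℒ (w s)‖ := by
    rw [← intervalIntegral.integral_eq_sub_of_hasDerivAt hw hg.neg.intervalIntegrable]
    simpa using intervalIntegral.norm_integral_le_integral_norm (f := fun s => -gradient ℒ (w s)) ht
  calc ‖w t - w 0‖ ^ 2 ≤ (∫ s in (0)..t, ‖gradient ℒ (w s)‖) ^ 2 := by gcongr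
    _ ≤ (t - 0) * ∫ s in (0)..t, ‖gradient ℒ (w s)‖ ^ 2 :=
      sq_intervalIntegral_le_mul_intervalIntegral_sq ht hg.norm.intervalIntegrable
        (hg.norm.pow 2).intervalIntegrable
    _ = t * (ℒ (w 0) - ℒ (w t)) := by rw [sub_zero, hdissipation]

end GradientFlow

section SquareLoss

variable {W d : ℕ} {Φ : EuclideanSpace ℝ (Fin W) → EuclideanSpace ℝ (Fin d)}
  {f : EuclideanSpace ℝ (Fin d)}

theorem loss_nonneg (w : EuclideanSpace ℝ (Fin W)) : 0 ≤ loss Φ f w := by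
  unfold loss; positivity

theorem hasGradientAt_loss {x : EuclideanSpace ℝ (Fin W)} (hΦ : DifferentiableAt ℝ Φ x) :
    HasGradientAt (loss Φ f) (ContinuousLinearMap.adjoint (fderiv ℝ Φ x) (Φ x - f)) x := by
  have h := (hΦ.hasFDerivAt.const_sub f).norm_sq.const_mul (1 / 2 : ℝ)
  rw [hasGradientAt_iff_hasFDerivAt]
  refine h.congr_fderiv (ContinuousLinearMap.ext fun y => ?_)
  simp [ContinuousLinearMap.adjoint_inner_left]

theorem gradient_loss (hΦ : Differentiable ℝ Φ) :
    gradient (loss Φ f) = fun x => ContinuousLinearMap.adjoint (fderiv ℝ Φ x) (Φ x - f) :=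
  funext fun x => (hasGradientAt_loss (hΦ x)).gradient

theorem locallyLipschitz_gradient_loss (hΦ : ContDiff ℝ 1 Φ)
    (hΦ' : LocallyLipschitz (fderiv ℝ Φ)) : LocallyLipschitz (gradient (loss Φ f)) := by
  rw [gradient_loss (hΦ.differentiable one_ne_zero)]
  exact (ContinuousLinearMap.adjoint.lipschitz.locallyLipschitz.comp hΦ').clm_apply
    (hΦ.locallyLipschitz.sub (.const f))

theorem sq_norm_le_loss_zero_mul (hΦ : ContDiff ℝ 1 Φ) {w : ℝ → EuclideanSpace ℝ (Fin W)}
    (hw₀ : w 0 = 0) {t : ℝ} (ht : 0 ≤ t)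
    (hw : ∀ s ∈ Icc 0 t, HasDerivAt w (-(gradient (loss Φ f) (w s))) s) :
    ‖w t‖ ^ 2 ≤ loss Φ f 0 * t := by
  have hΦd := hΦ.differentiable one_ne_zero
  have hgrad : Continuous (gradient (loss Φ f)) := by
    rw [gradient_loss hΦd]
    exact (ContinuousLinearMap.adjoint.continuous.comp (hΦ.continuous_fderiv one_ne_zero)).clm_apply
      (hΦ.continuous.sub continuous_const)
  have h := norm_sub_sq_le_mul_of_hasDerivAt_neg_gradient
    (fun x => (hasGradientAt_loss (hΦd x)).differentiableAt) hgrad ht hw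
  rw [hw₀, sub_zero] at h
  nlinarith [mul_nonneg ht (loss_nonneg (Φ := Φ) (f := f) (w t))]

end SquareLoss

theorem global_existence_of_gradient_flow (W d : ℕ)
    (Φ : EuclideanSpace ℝ (Fin W) → EuclideanSpace ℝ (Fin d))
    (hΦ : ContDiff ℝ 1 Φ) (K : NNReal) (hlip : LipschitzWith K (fderiv ℝ Φ))
    (f : EuclideanSpace ℝ (Fin d)) :
    (∃ w : ℝ → EuclideanSpace ℝ (Fin W), w 0 = 0 ∧
      ∀ t ≥ (0 : ℝ), HasDerivAt w (-(gradient (loss Φ f) (w t))) t) ∧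
    (∀ w : ℝ → EuclideanSpace ℝ (Fin W), w 0 = 0 →
      (∀ t ≥ (0 : ℝ), HasDerivAt w (-(gradient (loss Φ f) (w t))) t) →
      ∀ t ≥ (0 : ℝ), ‖w t‖ ^ 2 ≤ loss Φ f 0 * t) := by
  have hfield := (locallyLipschitz_gradient_loss (f := f) hΦ hlip.locallyLipschitz).neg
  refine ⟨exists_forall_hasDerivAt_of_forall_exists_Icc hfield fun T => ?_,
    fun w hw₀ hw t ht => sq_norm_le_loss_zero_mul hΦ hw₀ ht fun s hs => hw s hs.1⟩
  exact exists_hasDerivAt_Icc_of_locallyLipschitz_of_norm_le hfield (ρ := √(loss Φ f 0 * T))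
    fun w hw₀ b hb hw => Real.le_sqrt_of_sq_le <| (sq_norm_le_loss_zero_mul hΦ hw₀ hb.1 hw).trans <|
      mul_le_mul_of_nonneg_left hb.2 (loss_nonneg 0)
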